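/- arXiv:1607.00702 — 5 statements merged into one kernel-verified Lean document; each statement's English description precedes it below -/
import Mathlib

section
/- The partition 𝒫 is regular-sparse with respect to A if and only if there exists a decomposition A = Σ_{k=1}^K ψ_k ψ_kᵀ such that on every patch P_m its local dimension equals the local rank, i.e. d_m = #{k : ψ_k|_{P_m} ≠ 0} = K_m = rank(A_mm) for all m = 1, ..., M. -/
/-!
Restricting `A = ∑ₖ gₖ gₖᵀ` to a patch `P` gives `A_PP = ∑ₖ (gₖ|_P)(gₖ|_P)ᵀ = GᵀG`, where the
rows of `G` are the restrictions `gₖ|_P`; over `ℝ` this Gram matrix has the rank of `G`, so `K_P`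
is the dimension of the span of the restricted modes. The nonzero restrictions span the same space,
and a finite family is linearly independent exactly when its size is the dimension of its span.
Hence, for every decomposition and every patch, the nonzero restrictions are independent iff
`d_P = K_P`, and the same decomposition witnesses both sides.
-/

open Matrix BigOperators

/-- Restriction of a vector `ψ ∈ ℝ^N` to the indices in a patch `Pm`. -/
def restrictPatch {N : ℕ} (Pm : Finset (Fin N)) (ψ : Fin N → ℝ) : ↥Pm → ℝ :=
  fun i => ψ i

/-- Patch-wise sparseness `s(ψ;𝒫)`: the number of patches on which `ψ` is nonzero. -/
noncomputable def sparseness {N M : ℕ} (P : Fin M → Finset (Fin N)) (ψ : Fin N → ℝ) : ℕ :=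
  {m : Fin M | restrictPatch (P m) ψ ≠ 0}.ncard

/-- `P` is a partition of `{1,...,N}` into disjoint nonempty patches. -/
def IsPartition {N M : ℕ} (P : Fin M → Finset (Fin N)) : Prop :=
  (∀ m, (P m).Nonempty) ∧ (∀ m m', m ≠ m' → Disjoint (P m) (P m')) ∧ (∀ i, ∃ m, i ∈ P m)

/-- `K_m`: the rank of the principal submatrix `A_mm`. -/
noncomputable def patchRank {N : ℕ} (A : Matrix (Fin N) (Fin N) ℝ) (Pm : Finset (Fin N)) : ℕ :=
  (A.submatrix (fun i : ↥Pm => (i : Fin N)) (fun i : ↥Pm => (i : Fin N))).rank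

/-- The partition `P` is regular-sparse w.r.t. `A`. -/
def RegularSparse {N M : ℕ} (K : ℕ) (A : Matrix (Fin N) (Fin N) ℝ)
    (P : Fin M → Finset (Fin N)) : Prop :=
  ∃ g : Fin K → Fin N → ℝ,
    A = ∑ k, vecMulVec (g k) (g k) ∧
    ∀ m, LinearIndependent ℝ
      (fun k : {k : Fin K // restrictPatch (P m) (g k) ≠ 0} =>
        restrictPatch (P m) (g (k : Fin K)))

/-- `(ψ_1,...,ψ_K)` is a set of intrinsic sparse modes of `A` w.r.t. the partition `P`. -/
def IsISM {N M K : ℕ} (A : Matrix (Fin N) (Fin N) ℝ) (P : Fin M → Finset (Fin N))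
    (ψ : Fin K → Fin N → ℝ) : Prop :=
  A = ∑ k, vecMulVec (ψ k) (ψ k) ∧
  ∀ φ : Fin K → Fin N → ℝ, A = ∑ k, vecMulVec (φ k) (φ k) →
    ∑ k, sparseness P (ψ k) ≤ ∑ k, sparseness P (φ k)

/-- Two modes are unidentifiable on partition `P`: supported on exactly the same patches. -/
def Unidentifiable {N M : ℕ} (P : Fin M → Finset (Fin N)) (g g' : Fin N → ℝ) : Prop :=
  ∀ m, restrictPatch (P m) g ≠ 0 ↔ restrictPatch (P m) g' ≠ 0

/-- The block diagonal matrix `H_ext = diag(H_1, ..., H_M)`. -/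
def Hext {N M : ℕ} (P : Fin M → Finset (Fin N)) (Km : Fin M → ℕ)
    (H : ∀ m, Matrix ↥(P m) (Fin (Km m)) ℝ) :
    Matrix (Fin N) ((m : Fin M) × Fin (Km m)) ℝ :=
  Matrix.of fun i c => if h : i ∈ P c.1 then H c.1 ⟨i, h⟩ c.2 else 0

/-- The `(m,n)` block `Λ_mn` of a matrix indexed by `Σ m, Fin (Km m)`. -/
def ΛBlock {M : ℕ} {Km : Fin M → ℕ}
    (Λ : Matrix ((m : Fin M) × Fin (Km m)) ((m : Fin M) × Fin (Km m)) ℝ) (m n : Fin M) :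
    Matrix (Fin (Km m)) (Fin (Km n)) ℝ :=
  Matrix.of fun i j => Λ ⟨m, i⟩ ⟨n, j⟩

/-- Joint diagonalization objective: sum of squares of off-diagonal entries of `Vᵀ S_n V`. -/
noncomputable def offDiagObj {n M : ℕ} (S : Fin M → Matrix (Fin n) (Fin n) ℝ)
    (V : Matrix (Fin n) (Fin n) ℝ) : ℝ :=
  ∑ p, ∑ i, ∑ j, if i ≠ j then ((Vᵀ * S p * V) i j) ^ 2 else 0

theorem Matrix.rank_sum_vecMulVec_self {R κ n : Type*} [Field R] [LinearOrder R]
    [IsStrictOrderedRing R] [Fintype κ] [Fintype n] (v : κ → n → R) :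
    (∑ k, vecMulVec (v k) (v k)).rank = Module.finrank R (Submodule.span R (Set.range v)) := by
  have hgram : ∑ k, vecMulVec (v k) (v k) = (Matrix.of v)ᵀ * Matrix.of v := by
    ext i j
    simp [Matrix.sum_apply, Matrix.mul_apply, vecMulVec_apply]
  rw [hgram, rank_transpose_mul_self, rank_eq_finrank_span_row]
  rfl

theorem Submodule.span_range_subtype_ne_zero {R V ι : Type*} [Semiring R] [AddCommMonoid V]
    [Module R V] (v : ι → V) :
    span R (Set.range fun k : {k // v k ≠ 0} => v k) = span R (Set.range v) := by
  have hrange : (Set.range fun k : {k // v k ≠ 0} => v k) = Set.range v \ {0} := by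
    ext x
    simp only [Set.mem_range, Set.mem_sdiff, Set.mem_singleton_iff, Subtype.exists]
    constructor
    · rintro ⟨k, hk, rfl⟩
      exact ⟨⟨k, rfl⟩, hk⟩
    · rintro ⟨⟨k, rfl⟩, hk⟩
      exact ⟨k, hk, rfl⟩
  rw [hrange, span_sdiff_singleton_zero]

theorem linearIndependent_subtype_ne_zero_iff_ncard_eq_finrank {K V ι : Type*}
    [DivisionRing K] [AddCommGroup V] [Module K V] [Finite ι] (v : ι → V) :
    LinearIndependent K (fun k : {k // v k ≠ 0} => v k) ↔
      {k | v k ≠ 0}.ncard = Module.finrank K (Submodule.span K (Set.range v)) := by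
  have : Fintype {k // v k ≠ 0} := Fintype.ofFinite _
  rw [linearIndependent_iff_card_eq_finrank_span, Set.finrank,
    Submodule.span_range_subtype_ne_zero, ← Nat.card_eq_fintype_card]
  rfl

theorem patchRank_eq_finrank_span_restrictPatch {ι : Type*} [Fintype ι] {N : ℕ}
    (A : Matrix (Fin N) (Fin N) ℝ) (g : ι → Fin N → ℝ) (hA : A = ∑ k, vecMulVec (g k) (g k))
    (Pm : Finset (Fin N)) :
    patchRank A Pm =
      Module.finrank ℝ (Submodule.span ℝ (Set.range fun k => restrictPatch Pm (g k))) := by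
  have hblock : A.submatrix (fun i : Pm => (i : Fin N)) (fun i : Pm => (i : Fin N)) =
      ∑ k, vecMulVec (restrictPatch Pm (g k)) (restrictPatch Pm (g k)) := by
    ext i j
    simp [hA, Matrix.sum_apply, vecMulVec_apply, restrictPatch]
  rw [patchRank, hblock, rank_sum_vecMulVec_self]

theorem linearIndependent_restrictPatch_iff_ncard_eq_patchRank {ι : Type*} [Fintype ι]
    {N : ℕ} (A : Matrix (Fin N) (Fin N) ℝ) (g : ι → Fin N → ℝ) (hA : A = ∑ k, vecMulVec (g k) (g k))
    (Pm : Finset (Fin N)) :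
    LinearIndependent ℝ (fun k : {k // restrictPatch Pm (g k) ≠ 0} => restrictPatch Pm (g k)) ↔
      {k | restrictPatch Pm (g k) ≠ 0}.ncard = patchRank A Pm := by
  rw [patchRank_eq_finrank_span_restrictPatch A g hA,
    linearIndependent_subtype_ne_zero_iff_ncard_eq_finrank]

theorem regularSparse_iff_exists_decomposition_localDim_eq_patchRank_general
    {N M K : ℕ} (A : Matrix (Fin N) (Fin N) ℝ)
    (P : Fin M → Finset (Fin N)) :
    RegularSparse K A P ↔
      ∃ ψ : Fin K → Fin N → ℝ,
        A = ∑ k, vecMulVec (ψ k) (ψ k) ∧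
        ∀ m, {k : Fin K | restrictPatch (P m) (ψ k) ≠ 0}.ncard = patchRank A (P m) :=
  exists_congr fun ψ => and_congr_right fun hA => forall_congr' fun m =>
    linearIndependent_restrictPatch_iff_ncard_eq_patchRank A ψ hA (P m)

/-- The partition `𝒫` is regular-sparse with respect to `A` if and only if
there exists a decomposition `A = Σ_{k=1}^K ψ_k ψ_kᵀ` such that on every patch the local
dimension `d_m = #{k : ψ_k|_{P_m} ≠ 0}` equals the local rank `K_m = rank(A_mm)`. -/
theorem regularSparse_iff_exists_decomposition_localDim_eq_patchRank
    {N M K : ℕ} (A : Matrix (Fin N) (Fin N) ℝ)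
    (hA : A.PosSemidef) (hrank : A.rank = K)
    (P : Fin M → Finset (Fin N)) (hP : IsPartition P) :
    RegularSparse K A P ↔
      ∃ ψ : Fin K → Fin N → ℝ,
        A = ∑ k, vecMulVec (ψ k) (ψ k) ∧
        ∀ m, {k : Fin K | restrictPatch (P m) (ψ k) ≠ 0}.ncard = patchRank A (P m) :=
  regularSparse_iff_exists_decomposition_localDim_eq_patchRank_general A P
end

section
/- Suppose 𝒫 is regular-sparse with respect to A and let (ψ_1,...,ψ_K) be a set of intrinsic sparse modes of A with indicator matrix L. Then there exists a block-diagonal orthogonal matrix D = diag(D_1,...,D_M), with D_m ∈ O(K_m) for each m, such that Λ = D (L Lᵀ) Dᵀ; in particular, Λ and L Lᵀ have the same eigenvalues with the same multiplicities. -/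
open Matrix BigOperators

/-!
On a patch `P_m` we have `A_mm = Ψ_m Ψ_mᵀ`, where the columns of `Ψ_m` are the `d_m` nonzero
restrictions `ψ_k|_{P_m}`; hence `K_m ≤ d_m`. A regular-sparse decomposition attains `K_m` on every
patch, so minimality of the intrinsic sparse modes forces `d_m = K_m`. Since `H_m` has full column
rank, `Ψ_m Ψ_mᵀ = H_m H_mᵀ` gives `Ψ_m = H_m D_m` with `D_m` orthogonal, and gluing the patches,
`Ψ = H_ext D L`. Then `H_ext Λ H_extᵀ = A = H_ext (D L)(D L)ᵀ H_extᵀ`, and `H_ext` has full column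
rank, so `Λ = D L Lᵀ Dᵀ`.
-/
namespace Matrix

theorem sum_vecMulVec_self_eq_transpose_mul {ι n R : Type*} [Fintype ι] [CommSemiring R]
    (f : ι → n → R) : ∑ k, vecMulVec (f k) (f k) = (of f)ᵀ * of f := by
  ext i j
  simp [Matrix.sum_apply, vecMulVec_apply, mul_apply]

theorem submatrix_sigmaMk_blockDiagonal'_mul {ι o R : Type*} {m' n' : ι → Type*}
    [Fintype ι] [DecidableEq ι] [∀ i, Fintype (n' i)] [NonUnitalNonAssocSemiring R]
    (C : ∀ i, Matrix (m' i) (n' i) R) (X : Matrix (Σ i, n' i) o R) (i : ι) :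
    (blockDiagonal' C * X).submatrix (Sigma.mk i) id = C i * X.submatrix (Sigma.mk i) id := by
  ext a k
  simp only [submatrix_apply, id, mul_apply, Fintype.sum_sigma]
  rw [Finset.sum_eq_single i]
  · simp [blockDiagonal'_apply_eq]
  · intro i' _ hi'
    exact Finset.sum_eq_zero fun b _ => by rw [blockDiagonal'_apply_ne C a b hi'.symm, zero_mul]
  · simp

variable {l m n R : Type*}

section CommRing

variable [CommRing R] [Fintype m]

theorem mul_right_cancel_of_linearIndependent_col {A : Matrix l m R}
    (hA : LinearIndependent R A.col) {B C : Matrix m n R} (h : A * B = A * C) : B = C :=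
  ext_col fun j => mulVec_injective_iff.mpr hA congr(($h).col j)

theorem eq_of_mul_mul_transpose_eq [Fintype l] {A : Matrix l m R}
    (hA : LinearIndependent R A.col) {B C : Matrix m m R}
    (h : A * B * Aᵀ = A * C * Aᵀ) : B = C := by
  have hBA : B * Aᵀ = C * Aᵀ :=
    mul_right_cancel_of_linearIndependent_col hA (by simpa only [Matrix.mul_assoc] using h)
  have hAB : A * Bᵀ = A * Cᵀ := by
    simpa only [transpose_mul, transpose_transpose] using congr(($hBA)ᵀ)
  simpa using congr(($(mul_right_cancel_of_linearIndependent_col hA hAB))ᵀ)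

end CommRing

section OrderedField

variable [Field R] [LinearOrder R] [IsStrictOrderedRing R] [Fintype l] [Fintype m] [Fintype n]

theorem range_mulVecLin_mul_transpose (A : Matrix l m R) :
    LinearMap.range (A * Aᵀ).mulVecLin = LinearMap.range A.mulVecLin := by
  apply Submodule.eq_of_le_of_finrank_eq
  · rw [mulVecLin_mul]
    exact LinearMap.range_comp_le_range _ _
  · exact rank_self_mul_transpose A

theorem exists_mul_eq_of_mul_transpose_eq [DecidableEq m] {H : Matrix l m R} {Ψ : Matrix l n R}
    (hH : LinearIndependent R H.col) (h : Ψ * Ψᵀ = H * Hᵀ) :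
    ∃ C : Matrix m n R, H * C = Ψ ∧ C * Cᵀ = 1 := by
  have hcol : ∀ k, Ψ.col k ∈ LinearMap.range H.mulVecLin := fun k => by
    rw [← range_mulVecLin_mul_transpose, ← h, range_mulVecLin_mul_transpose, range_mulVecLin]
    exact Submodule.subset_span ⟨k, rfl⟩
  choose c hc using hcol
  have hHC : H * (of c)ᵀ = Ψ := ext_col hc
  refine ⟨(of c)ᵀ, hHC, eq_of_mul_mul_transpose_eq hH ?_⟩
  rw [Matrix.mul_one, ← h, ← hHC]
  simp only [transpose_mul, Matrix.mul_assoc]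

end OrderedField

end Matrix

section Patches

variable {N M K : ℕ}

def patchModes (Pm : Finset (Fin N)) (f : Fin K → Fin N → ℝ) :
    Matrix Pm {k // restrictPatch Pm (f k) ≠ 0} ℝ :=
  of fun i k => f k i

theorem submatrix_sum_vecMulVec_eq_patchModes_mul_transpose (Pm : Finset (Fin N))
    (f : Fin K → Fin N → ℝ) :
    (∑ k, vecMulVec (f k) (f k)).submatrix ((↑) : Pm → Fin N) (↑) =
      patchModes Pm f * (patchModes Pm f)ᵀ := by
  classical
  ext i j
  have hvanish : ∀ k, ¬ restrictPatch Pm (f k) ≠ 0 → f k i * f k j = 0 := fun k hk => by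
    rw [not_not] at hk
    simp [show f k i = 0 from congrFun hk i]
  simp only [submatrix_apply, Matrix.sum_apply, vecMulVec_apply, mul_apply, patchModes,
    transpose_apply, of_apply]
  rw [← Finset.sum_filter_of_ne fun k _ hk => by_contra fun h => hk (hvanish k h)]
  exact Finset.sum_subtype _ (by simp) fun k => f k i * f k j

theorem patchRank_le_natCard (Pm : Finset (Fin N)) (f : Fin K → Fin N → ℝ) :
    patchRank (∑ k, vecMulVec (f k) (f k)) Pm ≤ Nat.card {k // restrictPatch Pm (f k) ≠ 0} := by
  classical
  rw [patchRank, submatrix_sum_vecMulVec_eq_patchModes_mul_transpose, rank_self_mul_transpose,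
    Nat.card_eq_fintype_card]
  exact rank_le_card_width _

theorem patchRank_eq_natCard_of_linearIndependent (Pm : Finset (Fin N)) (f : Fin K → Fin N → ℝ)
    (hf : LinearIndependent ℝ fun k : {k // restrictPatch Pm (f k) ≠ 0} => restrictPatch Pm (f k)) :
    patchRank (∑ k, vecMulVec (f k) (f k)) Pm = Nat.card {k // restrictPatch Pm (f k) ≠ 0} := by
  classical
  rw [patchRank, submatrix_sum_vecMulVec_eq_patchModes_mul_transpose, rank_self_mul_transpose,
    ← rank_transpose, Nat.card_eq_fintype_card]
  exact hf.rank_matrix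

theorem sum_sparseness_eq_sum_natCard (P : Fin M → Finset (Fin N)) (f : Fin K → Fin N → ℝ) :
    ∑ k, sparseness P (f k) = ∑ m, Nat.card {k // restrictPatch (P m) (f k) ≠ 0} := by
  classical
  simp only [sparseness, Set.ncard_eq_toFinset_card', Nat.card_eq_fintype_card,
    Fintype.card_subtype, Set.toFinset_ofPred, Finset.card_filter]
  exact Finset.sum_comm

theorem patchModes_submatrix_mul_indicator {d : ℕ} (Pm : Finset (Fin N))
    (f : Fin K → Fin N → ℝ) (e : Fin d ≃ {k // restrictPatch Pm (f k) ≠ 0})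
    (L : Matrix (Fin d) (Fin K) ℝ) (hL : ∀ i k, L i k = if (e i : Fin K) = k then 1 else 0) :
    (patchModes Pm f).submatrix id e * L = of fun (i : Pm) k => f k i := by
  ext i k
  simp only [mul_apply, hL, submatrix_apply, id, patchModes, of_apply, mul_ite, mul_one, mul_zero]
  by_cases hk : restrictPatch Pm (f k) ≠ 0
  · rw [Finset.sum_eq_single (e.symm ⟨k, hk⟩)]
    · simp
    · intro j _ hj
      rw [if_neg]
      rintro rfl
      exact hj (by simp)
    · simp
  · rw [not_not] at hk
    rw [show f k i = 0 from congrFun hk i]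
    refine Finset.sum_eq_zero fun j _ => ?_
    split_ifs with hj
    · exact absurd (hj ▸ hk) (e j).2
    · rfl

theorem natCard_support_eq_patchRank {A : Matrix (Fin N) (Fin N) ℝ} {P : Fin M → Finset (Fin N)}
    {ψ : Fin K → Fin N → ℝ} (hreg : RegularSparse K A P) (hism : IsISM A P ψ) (m : Fin M) :
    Nat.card {k // restrictPatch (P m) (ψ k) ≠ 0} = patchRank A (P m) := by
  obtain ⟨g, hg, hg_li⟩ := hreg
  obtain ⟨hψ, hmin⟩ := hism
  have hle : ∀ m, patchRank A (P m) ≤ Nat.card {k // restrictPatch (P m) (ψ k) ≠ 0} :=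
    fun m => hψ ▸ patchRank_le_natCard (P m) ψ
  have hsum : ∑ m, Nat.card {k // restrictPatch (P m) (ψ k) ≠ 0} ≤ ∑ m, patchRank A (P m) :=
    calc _ = ∑ k, sparseness P (ψ k) := (sum_sparseness_eq_sum_natCard P ψ).symm
      _ ≤ ∑ k, sparseness P (g k) := hmin g hg
      _ = ∑ m, patchRank A (P m) := by
        rw [sum_sparseness_eq_sum_natCard, hg]
        simp only [patchRank_eq_natCard_of_linearIndependent _ _ (hg_li _)]
  exact ((Finset.sum_eq_sum_iff_of_le fun m _ => hle m).mp
    (le_antisymm (Finset.sum_le_sum fun m _ => hle m) hsum) m (Finset.mem_univ m)).symm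

end Patches

section Hext

variable {N M : ℕ} {P : Fin M → Finset (Fin N)} {Km : Fin M → ℕ}
  {H : ∀ m, Matrix (P m) (Fin (Km m)) ℝ}

theorem Hext_mulVec_apply_of_mem (hdisj : ∀ m m', m ≠ m' → Disjoint (P m) (P m'))
    (v : (Σ m, Fin (Km m)) → ℝ) {i : Fin N} {m : Fin M} (hi : i ∈ P m) :
    (Hext P Km H *ᵥ v) i = (H m *ᵥ fun j => v ⟨m, j⟩) ⟨i, hi⟩ := by
  simp only [mulVec, dotProduct, Fintype.sum_sigma]
  rw [Finset.sum_eq_single m]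
  · simp [Hext, hi]
  · intro m' _ hm'
    have hi' : i ∉ P m' := Finset.disjoint_left.mp (hdisj m m' hm'.symm) hi
    exact Finset.sum_eq_zero fun j _ => by simp [Hext, hi']
  · simp

theorem Hext_mul_apply_of_mem {o : Type*} (hdisj : ∀ m m', m ≠ m' → Disjoint (P m) (P m'))
    (X : Matrix (Σ m, Fin (Km m)) o ℝ) {i : Fin N} {m : Fin M} (hi : i ∈ P m) (k : o) :
    (Hext P Km H * X) i k = (H m * X.submatrix (Sigma.mk m) id) ⟨i, hi⟩ k :=
  Hext_mulVec_apply_of_mem hdisj (X.col k) hi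

theorem linearIndependent_col_Hext (hdisj : ∀ m m', m ≠ m' → Disjoint (P m) (P m'))
    (hH : ∀ m, LinearIndependent ℝ (H m).col) : LinearIndependent ℝ (Hext P Km H).col := by
  rw [← mulVec_injective_iff]
  intro v w hvw
  ext ⟨m, j⟩
  refine congrFun (mulVec_injective_iff.mpr (hH m)
    (a₁ := fun j => v ⟨m, j⟩) (a₂ := fun j => w ⟨m, j⟩) (funext fun i => ?_)) j
  rw [← Hext_mulVec_apply_of_mem hdisj, ← Hext_mulVec_apply_of_mem hdisj, hvw]

end Hext

theorem transpose_of_eq_Hext_mul_blockDiagonal'_mul {N M K : ℕ} {P : Fin M → Finset (Fin N)}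
    (hdisj : ∀ m m', m ≠ m' → Disjoint (P m) (P m')) (hcover : ∀ i, ∃ m, i ∈ P m)
    {Km : Fin M → ℕ} {H : ∀ m, Matrix (P m) (Fin (Km m)) ℝ} {ψ : Fin K → Fin N → ℝ}
    (e : ∀ m, Fin (Km m) ≃ {k // restrictPatch (P m) (ψ k) ≠ 0})
    (L : Matrix (Σ m, Fin (Km m)) (Fin K) ℝ)
    (hL : ∀ m i k, L ⟨m, i⟩ k = if (e m i : Fin K) = k then 1 else 0)
    (C : ∀ m, Matrix (Fin (Km m)) (Fin (Km m)) ℝ)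
    (hHC : ∀ m, H m * C m = (patchModes (P m) ψ).submatrix id (e m)) :
    (of ψ)ᵀ = Hext P Km H * (blockDiagonal' C * L) := by
  ext i k
  obtain ⟨m, hi⟩ := hcover i
  have h := congrFun₂ (patchModes_submatrix_mul_indicator (P m) ψ (e m)
    (L.submatrix (Sigma.mk (β := fun m => Fin (Km m)) m) id) (hL m)) ⟨i, hi⟩ k
  rw [← hHC, Matrix.mul_assoc, ← submatrix_sigmaMk_blockDiagonal'_mul,
    ← Hext_mul_apply_of_mem hdisj] at h
  exact h.symm

theorem lambda_orthogonally_similar_to_LLT_general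
    {N M K : ℕ} (A : Matrix (Fin N) (Fin N) ℝ)
    (P : Fin M → Finset (Fin N)) (hP : IsPartition P)
    (hreg : RegularSparse K A P)
    (ψ : Fin K → Fin N → ℝ) (hism : IsISM A P ψ)
    (Km : Fin M → ℕ) (hKm : ∀ m, Km m = patchRank A (P m))
    (H : ∀ m, Matrix ↥(P m) (Fin (Km m)) ℝ)
    (hHli : ∀ m, LinearIndependent ℝ (fun j : Fin (Km m) => fun i : ↥(P m) => H m i j))
    (hH : ∀ m, A.submatrix (fun i : ↥(P m) => (i : Fin N)) (fun i : ↥(P m) => (i : Fin N))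
      = H m * (H m)ᵀ)
    (Λ : Matrix ((m : Fin M) × Fin (Km m)) ((m : Fin M) × Fin (Km m)) ℝ)
    (hΛ : A = Hext P Km H * Λ * (Hext P Km H)ᵀ)
    (d : Fin M → ℕ)
    (e : ∀ n, Fin (d n) ≃ {k : Fin K // restrictPatch (P n) (ψ k) ≠ 0})
    (L : Matrix ((m : Fin M) × Fin (d m)) (Fin K) ℝ)
    (hL : ∀ (m : Fin M) (i : Fin (d m)) (k : Fin K),
      L ⟨m, i⟩ k = if ((e m i : Fin K) = k) then 1 else 0) :
    ∃ (hd : ∀ m, d m = Km m)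
      (D : Matrix ((m : Fin M) × Fin (Km m)) ((m : Fin M) × Fin (Km m)) ℝ),
      (∀ p q : (m : Fin M) × Fin (Km m), p.1 ≠ q.1 → D p q = 0) ∧
      Dᵀ * D = 1 ∧ D * Dᵀ = 1 ∧
      Λ = D * (Matrix.reindex (Equiv.sigmaCongrRight fun m => finCongr (hd m))
        (Equiv.sigmaCongrRight fun m => finCongr (hd m)) (L * Lᵀ)) * Dᵀ ∧
      Λ.charpoly = (L * Lᵀ).charpoly := by
  have hd : ∀ m, d m = Km m := fun m => by
    rw [hKm, ← natCard_support_eq_patchRank hreg hism, ← Nat.card_congr (e m), Nat.card_fin]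
  refine ⟨hd, ?_⟩
  obtain rfl : d = Km := funext hd
  simp only [finCongr_refl, Equiv.sigmaCongrRight_refl, reindex_refl_refl]
  have hΨ : ∀ m, (patchModes (P m) ψ).submatrix id (e m) *
      ((patchModes (P m) ψ).submatrix id (e m))ᵀ = H m * (H m)ᵀ := fun m => by
    rw [← hH m, hism.1, submatrix_sum_vecMulVec_eq_patchModes_mul_transpose, transpose_submatrix,
      submatrix_mul_equiv, submatrix_id_id]
  choose C hHC hC using fun m => exists_mul_eq_of_mul_transpose_eq (hHli m) (hΨ m)
  have hDD : (blockDiagonal' C)ᵀ * blockDiagonal' C = 1 := by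
    rw [blockDiagonal'_transpose, ← blockDiagonal'_mul, ← blockDiagonal'_one]
    exact congrArg blockDiagonal' (funext fun m => mul_eq_one_comm.mp (hC m))
  have hmodes := transpose_of_eq_Hext_mul_blockDiagonal'_mul hP.2.1 hP.2.2 e L hL C hHC
  have hΛ' : Λ = blockDiagonal' C * (L * Lᵀ) * (blockDiagonal' C)ᵀ := by
    refine eq_of_mul_mul_transpose_eq (linearIndependent_col_Hext hP.2.1 hHli) ?_
    rw [← hΛ, hism.1, sum_vecMulVec_self_eq_transpose_mul, ← transpose_transpose (of ψ), hmodes]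
    simp only [transpose_mul, transpose_transpose, Matrix.mul_assoc]
  refine ⟨blockDiagonal' C, fun ⟨_, i⟩ ⟨_, j⟩ h => blockDiagonal'_apply_ne C i j h, hDD,
    mul_eq_one_comm.mp hDD, hΛ', ?_⟩
  rw [hΛ', charpoly_mul_comm, ← Matrix.mul_assoc, hDD, Matrix.one_mul]

/-- Suppose `𝒫` is regular-sparse w.r.t. `A` and `(ψ_1,...,ψ_K)` is a set of
intrinsic sparse modes of `A` with indicator matrix `L`. Then there exists a block-diagonal
orthogonal matrix `D = diag(D_1,...,D_M)` such that `Λ = D (L Lᵀ) Dᵀ`; in particular `Λ` and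
`L Lᵀ` have the same eigenvalues with the same multiplicities (equal characteristic
polynomials). -/
theorem lambda_orthogonally_similar_to_LLT
    {N M K : ℕ} (A : Matrix (Fin N) (Fin N) ℝ)
    (hA : A.PosSemidef) (hrank : A.rank = K)
    (P : Fin M → Finset (Fin N)) (hP : IsPartition P)
    (hreg : RegularSparse K A P)
    (ψ : Fin K → Fin N → ℝ) (hism : IsISM A P ψ)
    (Km : Fin M → ℕ) (hKm : ∀ m, Km m = patchRank A (P m))
    (H : ∀ m, Matrix ↥(P m) (Fin (Km m)) ℝ)
    (hHli : ∀ m, LinearIndependent ℝ (fun j : Fin (Km m) => fun i : ↥(P m) => H m i j))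
    (hH : ∀ m, A.submatrix (fun i : ↥(P m) => (i : Fin N)) (fun i : ↥(P m) => (i : Fin N))
      = H m * (H m)ᵀ)
    (Λ : Matrix ((m : Fin M) × Fin (Km m)) ((m : Fin M) × Fin (Km m)) ℝ)
    (hΛ : A = Hext P Km H * Λ * (Hext P Km H)ᵀ)
    (d : Fin M → ℕ)
    (e : ∀ n, Fin (d n) ≃ {k : Fin K // restrictPatch (P n) (ψ k) ≠ 0})
    (L : Matrix ((m : Fin M) × Fin (d m)) (Fin K) ℝ)
    (hL : ∀ (m : Fin M) (i : Fin (d m)) (k : Fin K),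
      L ⟨m, i⟩ k = if ((e m i : Fin K) = k) then 1 else 0) :
    ∃ (hd : ∀ m, d m = Km m)
      (D : Matrix ((m : Fin M) × Fin (Km m)) ((m : Fin M) × Fin (Km m)) ℝ),
      (∀ p q : (m : Fin M) × Fin (Km m), p.1 ≠ q.1 → D p q = 0) ∧
      Dᵀ * D = 1 ∧ D * Dᵀ = 1 ∧
      Λ = D * (Matrix.reindex (Equiv.sigmaCongrRight fun m => finCongr (hd m))
        (Equiv.sigmaCongrRight fun m => finCongr (hd m)) (L * Lᵀ)) * Dᵀ ∧
      Λ.charpoly = (L * Lᵀ).charpoly :=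
  lambda_orthogonally_similar_to_LLT_general A P hP hreg ψ hism Km hKm H hHli hH Λ hΛ d e L hL
end

section
/- If the partition 𝒫 is regular-sparse with respect to A, then every eigenvalue of the matrix Λ is a nonnegative integer. -/
/-! Write `A = G Gᵀ`, the columns of `G` being the modes `g_k`. On a patch `P_m` the restriction
`G_m` of `G` satisfies `G_m G_mᵀ = A_mm = H_m H_mᵀ`, so `G_m = H_m C_m` with `C_m C_mᵀ = I`:
the columns of `C_m` form a tight frame. By regular sparseness its nonzero vectors are linearly
independent, hence orthonormal, so `C_mᵀ C_m` is the diagonal `0/1` matrix marking the modes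
that live on `P_m`. Stacking the `C_m` into `C` gives `Λ = C Cᵀ`, whereas
`Cᵀ C = Σ_m C_mᵀ C_m` is diagonal with the number of patches met by `g_k` as `k`-th entry.
The nonzero eigenvalues of `C Cᵀ` and `Cᵀ C` coincide. -/

open Matrix BigOperators

namespace Matrix

variable {m n o R : Type*}

theorem mem_spectrum_mul_comm_of_ne_zero [Fintype m] [Fintype n] [DecidableEq m]
    [DecidableEq n] [Field R] {x : R} (hx : x ≠ 0) (A : Matrix m n R) (B : Matrix n m R)
    (h : x ∈ spectrum R (A * B)) : x ∈ spectrum R (B * A) := by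
  rw [mem_spectrum_iff_isRoot_charpoly, Polynomial.IsRoot.def] at *
  have := congrArg (Polynomial.eval x) (charpoly_mul_comm' A B)
  simp only [Polynomial.eval_mul, Polynomial.eval_pow, Polynomial.eval_X, h, mul_zero] at this
  exact (mul_eq_zero.mp this.symm).resolve_left (pow_ne_zero _ hx)

theorem sum_vecMulVec_col_eq_mul_transpose [Fintype n] [CommSemiring R] (G : Matrix m n R) :
    ∑ k, vecMulVec (G.col k) (G.col k) = G * Gᵀ := by
  ext i j
  simp [Matrix.sum_apply, vecMulVec_apply, Matrix.mul_apply]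

theorem mul_right_injective_of_mulVec_injective [Fintype n] [Fintype o] [CommSemiring R]
    {B : Matrix m n R} (hB : Function.Injective B.mulVec) :
    Function.Injective fun X : Matrix n o R => B * X := by
  intro X Y h
  rw [ext_iff_mulVec]
  intro v
  apply hB
  simp only [mulVec_mulVec]
  exact congrArg (· *ᵥ v) h

theorem eq_of_mul_mul_transpose_eq_s9 [Fintype m] [Fintype n] [CommSemiring R] {B : Matrix m n R}
    (hB : Function.Injective B.mulVec) {X Y : Matrix n n R} (h : B * X * Bᵀ = B * Y * Bᵀ) :
    X = Y := by
  have hXY : X * Bᵀ = Y * Bᵀ := by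
    simp only [Matrix.mul_assoc] at h
    exact mul_right_injective_of_mulVec_injective hB h
  have hXYt : B * Xᵀ = B * Yᵀ := by
    simpa only [transpose_mul, transpose_transpose] using congrArg transpose hXY
  simpa using congrArg transpose (mul_right_injective_of_mulVec_injective hB hXYt)

section LinearOrderedField

variable [Field R] [LinearOrder R] [IsStrictOrderedRing R]

theorem range_mulVecLin_mul_transpose_self [Fintype m] [Fintype n] (V : Matrix m n R) :
    LinearMap.range (V * Vᵀ).mulVecLin = LinearMap.range V.mulVecLin := by
  apply Submodule.eq_of_le_of_finrank_eq
  · rw [mulVecLin_mul]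
    exact LinearMap.range_comp_le_range _ _
  · exact rank_self_mul_transpose V

theorem exists_eq_mul_of_mul_transpose_eq [Fintype m] [Fintype n] [Fintype o] [DecidableEq n]
    {V : Matrix m o R} {B : Matrix m n R} (hB : Function.Injective B.mulVec)
    (hVB : V * Vᵀ = B * Bᵀ) : ∃ C : Matrix n o R, V = B * C ∧ C * Cᵀ = 1 := by
  have hrange : LinearMap.range V.mulVecLin = LinearMap.range B.mulVecLin := by
    rw [← range_mulVecLin_mul_transpose_self, hVB, range_mulVecLin_mul_transpose_self]
  have hcol (k : o) : V.col k ∈ LinearMap.range B.mulVecLin := by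
    rw [← hrange, range_mulVecLin]
    exact Submodule.subset_span ⟨k, rfl⟩
  choose c hc using hcol
  have hVBC : V = B * of fun j k => c k j := by
    ext i k
    exact (congrFun (hc k) i).symm
  refine ⟨_, hVBC, eq_of_mul_mul_transpose_eq_s9 hB ?_⟩
  rw [Matrix.mul_one, ← hVB, hVBC, transpose_mul]
  simp only [Matrix.mul_assoc]

end LinearOrderedField

theorem apply_eq_zero_of_mulVec_eq_zero [CommRing R] [Fintype n] {C : Matrix m n R}
    (hli : LinearIndepOn R C.col {k | C.col k ≠ 0}) {v : n → R} (hv : C *ᵥ v = 0) {k : n}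
    (hk : C.col k ≠ 0) : v k = 0 := by
  classical
  have hs : LinearIndepOn R C.col ↑(Finset.univ.filter fun k => C.col k ≠ 0) := by
    simpa using hli
  refine linearIndepOn_finset_iff.mp hs v ?_ k (by simpa using hk)
  rw [Finset.sum_filter_of_ne (p := fun i => C.col i ≠ 0)
    fun i _ hi hcol => hi (by rw [hcol, smul_zero]), ← hv]
  ext i
  simp [mulVec, dotProduct, Finset.sum_apply, mul_comm]

open Classical in
theorem transpose_mul_self_eq_diagonal_of_mul_transpose_eq_one [CommRing R] [Fintype m] [Fintype n]
    [DecidableEq m] [DecidableEq n] {C : Matrix m n R} (hC : C * Cᵀ = 1)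
    (hli : LinearIndepOn R C.col {k | C.col k ≠ 0}) :
    Cᵀ * C = diagonal fun k => if C.col k ≠ 0 then 1 else 0 := by
  set D : Matrix n n R := diagonal fun k => if C.col k ≠ 0 then 1 else 0
  have hCD : C * D = C := by
    ext i k
    by_cases hk : C.col k = 0
    · have hCik : C i k = 0 := congrFun hk i
      simp [D, hCik]
    · simp [D, hk]
  have hker : C * (Cᵀ * C - D) = 0 := by
    rw [Matrix.mul_sub, ← Matrix.mul_assoc, hC, Matrix.one_mul, hCD, sub_self]
  ext k l
  by_cases hk : C.col k = 0
  · have hCk (i : m) : C i k = 0 := congrFun hk i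
    simp [D, diagonal_apply, hk, mul_apply, hCk]
  · rw [← sub_eq_zero]
    refine apply_eq_zero_of_mulVec_eq_zero hli (v := (Cᵀ * C - D).col l) ?_ hk
    ext i
    simpa [mulVec, dotProduct, mul_apply] using congrFun (congrFun hker i) l

theorem linearIndepOn_col_of_mul [CommRing R] [Fintype n] {B : Matrix m n R}
    {C : Matrix n o R} (hB : Function.Injective B.mulVec)
    (h : LinearIndepOn R (B * C).col {k | (B * C).col k ≠ 0}) :
    LinearIndepOn R C.col {k | C.col k ≠ 0} := by
  have hcol : (B * C).col = B.mulVecLin ∘ C.col := rfl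
  have hsupp : {k | (B * C).col k ≠ 0} = {k | C.col k ≠ 0} := by
    ext k
    simp only [hcol, Set.mem_ofPred_eq, Function.comp_apply, mulVecLin_apply]
    exact hB.ne_iff' (mulVec_zero B)
  rw [hsupp, hcol] at h
  exact h.of_comp _

def fromSigmaRows {ι : Type*} {κ : ι → Type*} (C : ∀ i, Matrix (κ i) n R) :
    Matrix (Σ i, κ i) n R :=
  of fun p => C p.1 p.2

theorem fromSigmaRows_transpose_mul_self [CommSemiring R] {ι : Type*} [Fintype ι]
    {κ : ι → Type*} [∀ i, Fintype (κ i)] (C : ∀ i, Matrix (κ i) n R) :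
    (fromSigmaRows C)ᵀ * fromSigmaRows C = ∑ i, (C i)ᵀ * C i := by
  ext k l
  simp [fromSigmaRows, mul_apply, Matrix.sum_apply, Fintype.sum_sigma]

open Classical in
theorem fromSigmaRows_transpose_mul_self_eq_diagonal_card [CommRing R] {ι : Type*}
    [Fintype ι] {κ : ι → Type*} [∀ i, Fintype (κ i)] [∀ i, DecidableEq (κ i)] [Fintype n]
    [DecidableEq n] {C : ∀ i, Matrix (κ i) n R} (hC : ∀ i, C i * (C i)ᵀ = 1)
    (hli : ∀ i, LinearIndepOn R (C i).col {k | (C i).col k ≠ 0}) :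
    (fromSigmaRows C)ᵀ * fromSigmaRows C
      = diagonal fun k => ((Finset.univ.filter fun i => (C i).col k ≠ 0).card : R) := by
  rw [fromSigmaRows_transpose_mul_self, Finset.sum_congr rfl fun i _ =>
    transpose_mul_self_eq_diagonal_of_mul_transpose_eq_one (hC i) (hli i)]
  ext k l
  simp only [Matrix.sum_apply, diagonal_apply]
  split_ifs
  · exact Finset.sum_boole _ _
  · exact Finset.sum_const_zero

end Matrix

section Hext

variable {N M : ℕ} {P : Fin M → Finset (Fin N)} {Km : Fin M → ℕ}
  {H : ∀ m, Matrix ↥(P m) (Fin (Km m)) ℝ}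

theorem Hext_mulVec_apply (hdisj : ∀ m m', m ≠ m' → Disjoint (P m) (P m'))
    (x : (Σ m, Fin (Km m)) → ℝ) {m : Fin M} {i : Fin N} (hi : i ∈ P m) :
    (Hext P Km H *ᵥ x) i = (H m *ᵥ fun j => x ⟨m, j⟩) ⟨i, hi⟩ := by
  have hzero (m' : Fin M) (hm' : m' ≠ m) (j : Fin (Km m')) : Hext P Km H i ⟨m', j⟩ = 0 :=
    dif_neg fun hi' => Finset.disjoint_left.mp (hdisj m' m hm') hi' hi
  rw [mulVec, dotProduct, Fintype.sum_sigma,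
    Finset.sum_eq_single m (fun m' _ hm' => by simp [hzero m' hm']) (by simp)]
  simp [Hext, hi, mulVec, dotProduct]

theorem Hext_mulVec_injective (hdisj : ∀ m m', m ≠ m' → Disjoint (P m) (P m'))
    (hH : ∀ m, Function.Injective (H m).mulVec) : Function.Injective (Hext P Km H).mulVec := by
  intro x y hxy
  ext ⟨m, j⟩
  have hm : (fun j => x ⟨m, j⟩) = fun j => y ⟨m, j⟩ := hH m <| funext fun ⟨i, hi⟩ => by
    rw [← Hext_mulVec_apply hdisj x hi, ← Hext_mulVec_apply hdisj y hi, hxy]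
  exact congrFun hm j

theorem Hext_mul_fromSigmaRows {o : Type*} (hdisj : ∀ m m', m ≠ m' → Disjoint (P m) (P m'))
    (hcover : ∀ i, ∃ m, i ∈ P m) {G : Matrix (Fin N) o ℝ}
    {C : ∀ m, Matrix (Fin (Km m)) o ℝ}
    (hGC : ∀ m, G.submatrix (fun i : ↥(P m) => (i : Fin N)) id = H m * C m) :
    Hext P Km H * fromSigmaRows C = G := by
  ext i k
  obtain ⟨m, hi⟩ := hcover i
  exact (Hext_mulVec_apply hdisj _ hi).trans (congrFun (congrFun (hGC m) ⟨i, hi⟩) k).symm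

theorem RegularSparse.exists_eq_fromSigmaRows_mul_transpose {K : ℕ}
    {A : Matrix (Fin N) (Fin N) ℝ}
    (hdisj : ∀ m m', m ≠ m' → Disjoint (P m) (P m')) (hcover : ∀ i, ∃ m, i ∈ P m)
    (hreg : RegularSparse K A P) (hHinj : ∀ m, Function.Injective (H m).mulVec)
    (hH : ∀ m, A.submatrix (fun i : ↥(P m) => (i : Fin N)) (fun i : ↥(P m) => (i : Fin N))
      = H m * (H m)ᵀ)
    {Λ : Matrix ((m : Fin M) × Fin (Km m)) ((m : Fin M) × Fin (Km m)) ℝ}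
    (hΛ : A = Hext P Km H * Λ * (Hext P Km H)ᵀ) :
    ∃ C : ∀ m, Matrix (Fin (Km m)) (Fin K) ℝ,
      (∀ m, C m * (C m)ᵀ = 1 ∧ LinearIndepOn ℝ (C m).col {k | (C m).col k ≠ 0}) ∧
      Λ = fromSigmaRows C * (fromSigmaRows C)ᵀ := by
  obtain ⟨g, hgA, hgli⟩ := hreg
  set G : Matrix (Fin N) (Fin K) ℝ := of fun i k => g k i
  have hAG : A = G * Gᵀ := hgA.trans (sum_vecMulVec_col_eq_mul_transpose G)
  set R := fun m => G.submatrix (fun i : ↥(P m) => (i : Fin N)) id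
  have hRR (m : Fin M) : R m * (R m)ᵀ = H m * (H m)ᵀ := by
    rw [← hH m, hAG, submatrix_mul _ _ _ id _ Function.bijective_id, transpose_submatrix]
  choose C hRC hCC using fun m => exists_eq_mul_of_mul_transpose_eq (hHinj m) (hRR m)
  refine ⟨C, fun m => ⟨hCC m, linearIndepOn_col_of_mul (hHinj m) (hRC m ▸ hgli m)⟩, ?_⟩
  refine eq_of_mul_mul_transpose_eq_s9 (Hext_mulVec_injective hdisj hHinj) ?_
  rw [← hΛ, hAG, ← Hext_mul_fromSigmaRows hdisj hcover hRC, transpose_mul]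
  simp only [Matrix.mul_assoc]

end Hext

theorem eigenvalues_of_lambda_are_nonneg_integers_general
    {N M K : ℕ} (A : Matrix (Fin N) (Fin N) ℝ)
    (P : Fin M → Finset (Fin N)) (hP : IsPartition P)
    (hreg : RegularSparse K A P)
    (Km : Fin M → ℕ)
    (H : ∀ m, Matrix ↥(P m) (Fin (Km m)) ℝ)
    (hHli : ∀ m, LinearIndependent ℝ (fun j : Fin (Km m) => fun i : ↥(P m) => H m i j))
    (hH : ∀ m, A.submatrix (fun i : ↥(P m) => (i : Fin N)) (fun i : ↥(P m) => (i : Fin N))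
      = H m * (H m)ᵀ)
    (Λ : Matrix ((m : Fin M) × Fin (Km m)) ((m : Fin M) × Fin (Km m)) ℝ)
    (hΛ : A = Hext P Km H * Λ * (Hext P Km H)ᵀ) :
    ∀ x : ℝ, x ∈ spectrum ℝ Λ → ∃ n : ℕ, x = (n : ℝ) := by
  obtain ⟨C, hC, hΛC⟩ := hreg.exists_eq_fromSigmaRows_mul_transpose hP.2.1 hP.2.2
    (fun m => mulVec_injective_iff.mpr (hHli m)) hH hΛ
  intro x hx
  rcases eq_or_ne x 0 with rfl | hx0
  · exact ⟨0, by simp⟩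
  have hxD := mem_spectrum_mul_comm_of_ne_zero hx0 _ _ (hΛC ▸ hx)
  rw [fromSigmaRows_transpose_mul_self_eq_diagonal_card (fun m => (hC m).1)
    (fun m => (hC m).2), spectrum_diagonal] at hxD
  obtain ⟨k, rfl⟩ := hxD
  exact ⟨_, rfl⟩

/-- Proposition 3.3 of the paper. If the partition `𝒫` is regular-sparse
with respect to `A`, then every eigenvalue of `Λ` is a nonnegative integer. -/
theorem eigenvalues_of_lambda_are_nonneg_integers
    {N M K : ℕ} (A : Matrix (Fin N) (Fin N) ℝ)
    (hA : A.PosSemidef) (hrank : A.rank = K)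
    (P : Fin M → Finset (Fin N)) (hP : IsPartition P)
    (hreg : RegularSparse K A P)
    (Km : Fin M → ℕ) (hKm : ∀ m, Km m = patchRank A (P m))
    (H : ∀ m, Matrix ↥(P m) (Fin (Km m)) ℝ)
    (hHli : ∀ m, LinearIndependent ℝ (fun j : Fin (Km m) => fun i : ↥(P m) => H m i j))
    (hH : ∀ m, A.submatrix (fun i : ↥(P m) => (i : Fin N)) (fun i : ↥(P m) => (i : Fin N))
      = H m * (H m)ᵀ)
    (Λ : Matrix ((m : Fin M) × Fin (Km m)) ((m : Fin M) × Fin (Km m)) ℝ)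
    (hΛ : A = Hext P Km H * Λ * (Hext P Km H)ᵀ) :
    ∀ x : ℝ, x ∈ spectrum ℝ Λ → ∃ n : ℕ, x = (n : ℝ) :=
  eigenvalues_of_lambda_are_nonneg_integers_general A P hP hreg Km H hHli hH Λ hΛ
end

section
/- Let 𝒫_c be a partition of {1,...,N} and let 𝒫_f be a refinement of 𝒫_c. If 𝒫_f is regular-sparse with respect to A, then 𝒫_c is also regular-sparse with respect to A. -/
/-!
A linear relation among the nonzero restrictions of the modes `g k` to a coarse patch restricts
to a relation on every fine patch inside it. If `g k` is nonzero at a point of the coarse patch,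
it is nonzero on the fine patch through that point, so independence there kills its coefficient.
-/

open Matrix BigOperators

theorem Finsupp.linearCombination_filter_ne_zero {ι R M : Type*} [Semiring R] [AddCommMonoid M]
    [Module R M] (v : ι → M) (l : ι →₀ R) [DecidablePred (v · ≠ 0)] :
    linearCombination R v (l.filter (v · ≠ 0)) = linearCombination R v l := by
  have hzero : linearCombination R v (l.filter (¬v · ≠ 0)) = 0 :=
    Finset.sum_eq_zero fun i _ => by by_cases hi : v i = 0 <;> simp [hi]
  conv_rhs => rw [← l.filter_add_filter_not (v · ≠ 0), map_add, hzero, add_zero]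

theorem linearIndepOn_ne_zero_iff {ι R M : Type*} [Ring R] [AddCommGroup M] [Module R M]
    {v : ι → M} :
    LinearIndepOn R v {i | v i ≠ 0} ↔
      ∀ l : ι →₀ R, Finsupp.linearCombination R v l = 0 → ∀ i, v i ≠ 0 → l i = 0 := by
  classical
  rw [linearIndepOn_iff]
  constructor
  · intro h l hl i hi
    have hfilter := h (l.filter (v · ≠ 0))
      ((Finsupp.mem_supported' _ _).2 fun _ hj => Finsupp.filter_apply_neg _ _ hj)
      ((Finsupp.linearCombination_filter_ne_zero v l).trans hl)
    rw [← Finsupp.filter_apply_pos (v · ≠ 0) l hi]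
    exact DFunLike.congr_fun hfilter i
  · intro h l hsupp hl
    ext i
    by_cases hi : v i = 0
    · exact Finsupp.notMem_support_iff.mp fun hmem => hsupp hmem hi
    · exact h l hl i hi

theorem linearIndepOn_domRestrict_ne_zero_of_cover {ι α R : Type*} [Ring R] {g : ι → α → R}
    {s : Set α}
    (hcover : ∀ x ∈ s, ∃ t ⊆ s, x ∈ t ∧
      LinearIndepOn R (fun k => t.domRestrict (g k)) {k | t.domRestrict (g k) ≠ 0}) :
    LinearIndepOn R (fun k => s.domRestrict (g k)) {k | s.domRestrict (g k) ≠ 0} := by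
  rw [linearIndepOn_ne_zero_iff]
  intro l hl k hk
  obtain ⟨⟨x, hxs⟩, hgx⟩ := Function.ne_iff.mp hk
  obtain ⟨t, hts, hxt, hind⟩ := hcover x hxs
  have hlt : Finsupp.linearCombination R (fun k => t.domRestrict (g k)) l = 0 := by
    have := congrArg (LinearMap.funLeft R R (Set.inclusion hts)) hl
    rwa [Finsupp.apply_linearCombination, map_zero] at this
  exact linearIndepOn_ne_zero_iff.mp hind l hlt k (Function.ne_iff.mpr ⟨⟨x, hxt⟩, hgx⟩)

theorem IsPartition.eq_of_mem {N M : ℕ} {P : Fin M → Finset (Fin N)} (hP : IsPartition P)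
    {i : Fin N} {m m' : Fin M} (hm : i ∈ P m) (hm' : i ∈ P m') : m = m' := by
  by_contra hne
  exact Finset.disjoint_left.mp (hP.2.1 m m' hne) hm hm'

theorem regularSparse_of_refinement_general
    {N Mc Mf K : ℕ} (A : Matrix (Fin N) (Fin N) ℝ)
    (Pc : Fin Mc → Finset (Fin N)) (hPc : IsPartition Pc)
    (Pf : Fin Mf → Finset (Fin N)) (hPf : IsPartition Pf)
    (hrefine : ∀ mf, ∃ mc, Pf mf ⊆ Pc mc)
    (hreg : RegularSparse K A Pf) :
    RegularSparse K A Pc := by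
  obtain ⟨g, hg, hind⟩ := hreg
  -- `restrictPatch P ψ` is definitionally `(↑P : Set (Fin N)).domRestrict ψ`.
  refine ⟨g, hg, fun mc => linearIndepOn_domRestrict_ne_zero_of_cover fun i hi => ?_⟩
  obtain ⟨mf, hmf⟩ := hPf.2.2 i
  obtain ⟨mc', hsub⟩ := hrefine mf
  obtain rfl : mc' = mc := hPc.eq_of_mem (hsub hmf) hi
  exact ⟨Pf mf, Finset.coe_subset.mpr hsub, hmf, hind mf⟩

/-- Lemma B.1 of the paper. If `𝒫_f` is a refinement of `𝒫_c` and `𝒫_f`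
is regular-sparse with respect to `A`, then `𝒫_c` is also regular-sparse with respect
to `A`. -/
theorem regularSparse_of_refinement
    {N Mc Mf K : ℕ} (A : Matrix (Fin N) (Fin N) ℝ)
    (hA : A.PosSemidef) (hrank : A.rank = K)
    (Pc : Fin Mc → Finset (Fin N)) (hPc : IsPartition Pc)
    (Pf : Fin Mf → Finset (Fin N)) (hPf : IsPartition Pf)
    (hrefine : ∀ mf, ∃ mc, Pf mf ⊆ Pc mc)
    (hreg : RegularSparse K A Pf) :
    RegularSparse K A Pc :=
  regularSparse_of_refinement_general A Pc hPc Pf hPf hrefine hreg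
end

section
/- Let M_1,...,M_K be n×n real symmetric matrices of the form M_k = D Λ_k Dᵀ, where D ∈ O(n) and each Λ_k = diag(λ_1(k),...,λ_n(k)) is diagonal. For i ∈ {1,...,n} let λ_i = (λ_i(1),...,λ_i(K)) ∈ ℝ^K, and suppose that there are exactly m distinct vectors among λ_1,...,λ_n, occurring with multiplicities q_1,...,q_m, and that equal vectors occupy consecutive indices. If V ∈ O(n) is a global minimizer of the joint diagonalization objective V ↦ Σ_{k=1}^K Σ_{i≠j} |(Vᵀ M_k V)_{i,j}|² over O(n), then there exist a permutation matrix Π ∈ ℝ^{n×n} and a block-diagonal matrix R = diag(R_1,...,R_m) with R_i ∈ O(q_i) for each i, such that V Π = D R. -/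
/-!
Since `D` diagonalizes every `M_k`, the minimum of the objective is `0`, so every `Vᵀ M_k V` is
diagonal. Then `U = Dᵀ V` is orthogonal and intertwines the diagonal matrices `Λ_k` and
`Vᵀ M_k V`, so `U i j ≠ 0` forces `λ_i` to equal the `j`-th joint eigenvalue of `V`: each column
of `U` lives in one block. The columns living in a block are orthonormal vectors supported on
that block, so no block receives more columns than its size; as the sizes add up to `n`, every
block receives exactly as many columns as its size, and permuting the columns into their blocks
makes `U` block diagonal.
-/
open Matrix BigOperators

open Finset

theorem Equiv.Perm.exists_apply_eq_of_card_fiber_le {ι β : Type*} [Fintype ι] [Fintype β]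
    [DecidableEq β] {f g : ι → β} (h : ∀ s, #{i | g i = s} ≤ #{i | f i = s}) :
    ∃ σ : Equiv.Perm ι, ∀ i, f (σ i) = g i := by
  have hsum : ∑ s, #{i | g i = s} = ∑ s, #{i | f i = s} := by
    rw [← card_eq_sum_card_fiberwise (by simp), ← card_eq_sum_card_fiberwise (by simp)]
  have hcard s : Fintype.card {i // g i = s} = Fintype.card {i // f i = s} := by
    simpa only [Fintype.card_subtype] using
      (sum_eq_sum_iff_of_le fun s _ ↦ h s).1 hsum s (mem_univ s)
  let e s : {i // g i = s} ≃ {i // f i = s} := Fintype.equivOfCardEq (hcard s)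
  exact ⟨(Equiv.sigmaFiberEquiv g).symm.trans
    ((Equiv.sigmaCongrRight e).trans (Equiv.sigmaFiberEquiv f)), fun i ↦ (e (g i) ⟨i, rfl⟩).2⟩

namespace Matrix

section Orthonormal

variable {m n β R : Type*} [Fintype m] [DecidableEq n] [CommRing R] [Nontrivial R]

theorem exists_ne_zero_of_transpose_mul_self_eq_one {U : Matrix m n R} (hU : Uᵀ * U = 1)
    (j : n) : ∃ i, U i j ≠ 0 := by
  have h := congrFun (congrFun hU j) j
  rw [one_apply_eq, mul_apply] at h
  obtain ⟨i, -, hi⟩ := exists_ne_zero_of_sum_ne_zero (h ▸ one_ne_zero)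
  exact ⟨i, right_ne_zero_of_mul hi⟩

/-- The columns `j` with `t j = s` are orthonormal and supported on `{i | b i = s}`. -/
theorem card_fiber_le_of_transpose_mul_self_eq_one [Fintype n] [DecidableEq β]
    {U : Matrix m n R} (hU : Uᵀ * U = 1) {b : m → β} {t : n → β}
    (hbt : ∀ i j, U i j ≠ 0 → b i = t j) (s : β) :
    #{j | t j = s} ≤ #{i | b i = s} := by
  let A : Matrix {i // b i = s} {j // t j = s} R := U.submatrix (↑) (↑)
  have hA : Aᵀ * A = 1 := by
    ext c c'
    have hout : ∑ i : {i // ¬ b i = s}, U i c * U i c' = 0 :=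
      sum_eq_zero fun i _ ↦ by
        by_contra h
        exact i.2 ((hbt _ _ (left_ne_zero_of_mul h)).trans c.2)
    have h := congrFun (congrFun hU c) c'
    rw [mul_apply, ← Fintype.sum_subtype_add_sum_subtype (fun i ↦ b i = s)] at h
    simp only [transpose_apply, hout, add_zero] at h
    simpa [A, mul_apply, one_apply, Subtype.ext_iff] using h
  calc #{j | t j = s} = (1 : Matrix {j // t j = s} {j // t j = s} R).rank := by
        rw [rank_one, Fintype.card_subtype]
    _ ≤ A.rank := hA ▸ rank_mul_le_right _ _
    _ ≤ #{i | b i = s} := (rank_le_card_height A).trans_eq (Fintype.card_subtype _)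

theorem exists_perm_block_of_transpose_mul_self_eq_one [Fintype n] [Fintype β] [DecidableEq β]
    {U : Matrix n n R} (hU : Uᵀ * U = 1) {b : n → β}
    (hcol : ∀ i i' j, U i j ≠ 0 → U i' j ≠ 0 → b i = b i') :
    ∃ σ : Equiv.Perm n, ∀ i j, U i j ≠ 0 → b i = b (σ j) := by
  choose r hr using exists_ne_zero_of_transpose_mul_self_eq_one hU
  have hbt i j (h : U i j ≠ 0) : b i = b (r j) := hcol i (r j) j h (hr j)
  obtain ⟨σ, hσ⟩ := Equiv.Perm.exists_apply_eq_of_card_fiber_le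
    (card_fiber_le_of_transpose_mul_self_eq_one hU hbt)
  exact ⟨σ, fun i j h ↦ (hbt i j h).trans (hσ j).symm⟩

end Orthonormal

section Square

variable {n R : Type*} [Fintype n] [DecidableEq n] [CommRing R]

theorem transpose_mul_permMatrix_mul_self {U : Matrix n n R} (hU : Uᵀ * U = 1)
    (σ : Equiv.Perm n) : (U * σ.permMatrix R)ᵀ * (U * σ.permMatrix R) = 1 := by
  rw [transpose_mul, Matrix.mul_assoc, ← Matrix.mul_assoc Uᵀ, hU, Matrix.one_mul,
    transpose_permMatrix, ← permMatrix_mul, mul_inv_cancel, permMatrix_one]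

theorem mul_permMatrix_mul_transpose_self {U : Matrix n n R} (hU : U * Uᵀ = 1)
    (σ : Equiv.Perm n) : U * σ.permMatrix R * (U * σ.permMatrix R)ᵀ = 1 := by
  rw [transpose_mul, Matrix.mul_assoc, ← Matrix.mul_assoc _ _ Uᵀ, transpose_permMatrix,
    ← permMatrix_mul, inv_mul_cancel, permMatrix_one, Matrix.one_mul, hU]

theorem transpose_mul_conj (A : Matrix n n R) {D : Matrix n n R} (hD : Dᵀ * D = 1) :
    Dᵀ * (D * A * Dᵀ) = A * Dᵀ := by
  rw [← Matrix.mul_assoc, ← Matrix.mul_assoc, hD, Matrix.one_mul]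

theorem diagonal_mul_transpose_mul_eq {D V M : Matrix n n R} {a c : n → R} (hD : Dᵀ * D = 1)
    (hV : V * Vᵀ = 1) (hM : M = D * diagonal a * Dᵀ) (h : Vᵀ * M * V = diagonal c) :
    diagonal a * (Dᵀ * V) = Dᵀ * V * diagonal c := by
  rw [← h, ← Matrix.mul_assoc, ← transpose_mul_conj _ hD, ← hM]
  simp only [Matrix.mul_assoc]
  rw [← Matrix.mul_assoc V, hV, Matrix.one_mul]

theorem eq_of_diagonal_mul_eq_mul_diagonal [NoZeroDivisors R] {a c : n → R}
    {U : Matrix n n R} (h : diagonal a * U = U * diagonal c) {i j : n} (hU : U i j ≠ 0) :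
    a i = c j := by
  have h := congrFun (congrFun h i) j
  rw [diagonal_mul, mul_diagonal, mul_comm] at h
  exact mul_left_cancel₀ hU h

end Square

end Matrix

section OffDiagObj

variable {n M : ℕ} {S : Fin M → Matrix (Fin n) (Fin n) ℝ}

theorem offDiagObj_nonneg (V : Matrix (Fin n) (Fin n) ℝ) :
    0 ≤ offDiagObj S V := by
  unfold offDiagObj
  positivity

theorem offDiagObj_eq_zero_iff {V : Matrix (Fin n) (Fin n) ℝ} :
    offDiagObj S V = 0 ↔ ∀ p, (Vᵀ * S p * V).IsDiag := by
  have hterm p (i j : Fin n) : 0 ≤ if i ≠ j then ((Vᵀ * S p * V) i j) ^ 2 else 0 := by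
    positivity
  simp only [offDiagObj, IsDiag, Pairwise]
  rw [Fintype.sum_eq_zero_iff_of_nonneg fun p ↦ by positivity, funext_iff]
  refine forall_congr' fun p ↦ ?_
  rw [Pi.zero_apply, Fintype.sum_eq_zero_iff_of_nonneg fun i ↦ Fintype.sum_nonneg (hterm p i),
    funext_iff]
  refine forall_congr' fun i ↦ ?_
  rw [Pi.zero_apply, Fintype.sum_eq_zero_iff_of_nonneg (hterm p i), funext_iff]
  simp

theorem isDiag_of_offDiagObj_le {V W : Matrix (Fin n) (Fin n) ℝ}
    (h : offDiagObj S V ≤ offDiagObj S W) (hW : ∀ p, (Wᵀ * S p * W).IsDiag) (p : Fin M) :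
    (Vᵀ * S p * V).IsDiag :=
  offDiagObj_eq_zero_iff.1
    (le_antisymm (h.trans_eq (offDiagObj_eq_zero_iff.2 hW)) (offDiagObj_nonneg V)) p

end OffDiagObj

theorem joint_diagonalizer_unique_up_to_block_rotation_general
    {n K m : ℕ}
    (lam : Fin n → Fin K → ℝ)
    (b : Fin n → Fin m)
    (hsep : ∀ i j : Fin n, lam i = lam j ↔ b i = b j)
    (D : Matrix (Fin n) (Fin n) ℝ) (hD : Dᵀ * D = 1 ∧ D * Dᵀ = 1)
    (Mk : Fin K → Matrix (Fin n) (Fin n) ℝ)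
    (hMk : ∀ k, Mk k = D * Matrix.diagonal (fun i => lam i k) * Dᵀ)
    (V : Matrix (Fin n) (Fin n) ℝ) (hV : Vᵀ * V = 1 ∧ V * Vᵀ = 1)
    (hmin : ∀ W : Matrix (Fin n) (Fin n) ℝ, Wᵀ * W = 1 → W * Wᵀ = 1 →
      offDiagObj Mk V ≤ offDiagObj Mk W) :
    ∃ (σ : Equiv.Perm (Fin n)) (R : Matrix (Fin n) (Fin n) ℝ),
      (∀ i j, b i ≠ b j → R i j = 0) ∧
      Rᵀ * R = 1 ∧ R * Rᵀ = 1 ∧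
      V * (Matrix.of fun i j => if σ i = j then (1 : ℝ) else 0) = D * R := by
  have hdiag k : (Vᵀ * Mk k * V).IsDiag := by
    refine isDiag_of_offDiagObj_le (hmin D hD.1 hD.2) (fun k ↦ ?_) k
    rw [hMk k, transpose_mul_conj _ hD.1, Matrix.mul_assoc, hD.1, Matrix.mul_one]
    exact isDiag_diagonal _
  set U := Dᵀ * V
  have hcol i i' j (hi : U i j ≠ 0) (hi' : U i' j ≠ 0) : b i = b i' := by
    have hlam i (h : U i j ≠ 0) : lam i = fun k ↦ (Vᵀ * Mk k * V) j j :=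
      funext fun k ↦ eq_of_diagonal_mul_eq_mul_diagonal
        (diagonal_mul_transpose_mul_eq hD.1 hV.2 (hMk k) (hdiag k).diagonal_diag.symm) h
    exact (hsep i i').1 ((hlam i hi).trans (hlam i' hi').symm)
  have hUU : Uᵀ * U = 1 := by
    rw [transpose_mul, transpose_transpose, Matrix.mul_assoc, ← Matrix.mul_assoc D, hD.2,
      Matrix.one_mul, hV.1]
  have hUU' : U * Uᵀ = 1 := by
    rw [transpose_mul, transpose_transpose, Matrix.mul_assoc, ← Matrix.mul_assoc V, hV.2,
      Matrix.one_mul, hD.1]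
  obtain ⟨σ, hσ⟩ := exists_perm_block_of_transpose_mul_self_eq_one hUU hcol
  have hP : (Matrix.of fun i j ↦ if σ i = j then (1 : ℝ) else 0) = σ.permMatrix ℝ := by
    ext i j
    simp [PEquiv.toMatrix_apply]
  refine ⟨σ, U * σ.permMatrix ℝ, fun i j hij ↦ ?_, transpose_mul_permMatrix_mul_self hUU σ,
    mul_permMatrix_mul_transpose_self hUU' σ, ?_⟩
  · rw [PEquiv.mul_toMatrix_toPEquiv, submatrix_apply, id]
    by_contra h
    exact hij ((hσ _ _ h).trans (by simp))
  · rw [hP, ← Matrix.mul_assoc, ← Matrix.mul_assoc, hD.2, Matrix.one_mul]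

/-- Theorem C.1 of the paper. Let `M_k = D Λ_k Dᵀ` with `D ∈ O(n)` and
`Λ_k = diag(λ_1(k),...,λ_n(k))`. Suppose the eigenvalue vectors `λ_i ∈ ℝ^K` take exactly `m`
distinct values with multiplicities `q_1,...,q_m`, with equal vectors occupying consecutive
indices (encoded by the monotone block map `b : Fin n → Fin m`). If `V ∈ O(n)` is a global
minimizer of the joint diagonalization objective, then there exist a permutation matrix `Π`
and a block-diagonal matrix `R = diag(R_1,...,R_m)` with `R_i ∈ O(q_i)` such that
`V Π = D R`. -/
theorem joint_diagonalizer_unique_up_to_block_rotation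
    {n K m : ℕ}
    (lam : Fin n → Fin K → ℝ)
    (q : Fin m → ℕ) (hq : ∀ t, 0 < q t)
    (b : Fin n → Fin m) (hb : Monotone b)
    (hcard : ∀ t : Fin m, (Finset.univ.filter fun i => b i = t).card = q t)
    (hsep : ∀ i j : Fin n, lam i = lam j ↔ b i = b j)
    (D : Matrix (Fin n) (Fin n) ℝ) (hD : Dᵀ * D = 1 ∧ D * Dᵀ = 1)
    (Mk : Fin K → Matrix (Fin n) (Fin n) ℝ)
    (hMk : ∀ k, Mk k = D * Matrix.diagonal (fun i => lam i k) * Dᵀ)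
    (V : Matrix (Fin n) (Fin n) ℝ) (hV : Vᵀ * V = 1 ∧ V * Vᵀ = 1)
    (hmin : ∀ W : Matrix (Fin n) (Fin n) ℝ, Wᵀ * W = 1 → W * Wᵀ = 1 →
      offDiagObj Mk V ≤ offDiagObj Mk W) :
    ∃ (σ : Equiv.Perm (Fin n)) (R : Matrix (Fin n) (Fin n) ℝ),
      (∀ i j, b i ≠ b j → R i j = 0) ∧
      Rᵀ * R = 1 ∧ R * Rᵀ = 1 ∧
      V * (Matrix.of fun i j => if σ i = j then (1 : ℝ) else 0) = D * R :=
  joint_diagonalizer_unique_up_to_block_rotation_general lam b hsep D hD Mk hMk V hV hmin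
end
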